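/- arXiv:1001.5006 — 5 statements merged into one kernel-verified Lean document; each statement's English description precedes it below -/
import Mathlib

section
/- If two (k-1)-dimensional linear subspaces l₁, l₂ of ℙⁿ are in special position with respect to (n-k)-planes (i.e., every (n-k)-plane meeting one of them meets the other), then l₁ = l₂. -/
/-! If `l₁ ⊄ l₂`, a vector of `l₁` outside `l₂` spans a line disjoint from `l₂`; enlarging it to
a complement of `l₂` gives an `(n-k)`-plane that meets `l₁` but not `l₂`. By symmetry
`l₁ = l₂`. -/

open Module

namespace Submodule

variable {K V : Type*} [DivisionRing K] [AddCommGroup V] [Module K V]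

theorem exists_isCompl_inf_ne_bot_of_not_le {p q : Submodule K V} (h : ¬ p ≤ q) :
    ∃ M : Submodule K V, IsCompl M q ∧ p ⊓ M ≠ ⊥ := by
  obtain ⟨v, hvp, hvq⟩ := SetLike.not_le_iff_exists.mp h
  have hv : v ≠ 0 := fun hv => hvq (hv ▸ q.zero_mem)
  have hdisj : Disjoint (K ∙ v) q := (disjoint_span_singleton' hv).mpr hvq |>.symm
  obtain ⟨M, hvM, hM⟩ := hdisj.exists_isCompl
  exact ⟨M, hM, (Submodule.ne_bot_iff _).mpr ⟨v, ⟨hvp, hvM (mem_span_singleton_self v)⟩, hv⟩⟩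

theorem le_of_forall_finrank_add_eq_inf_ne_bot [FiniteDimensional K V] {p q : Submodule K V}
    (h : ∀ L : Submodule K V, finrank K L + finrank K q = finrank K V → p ⊓ L ≠ ⊥ →
      q ⊓ L ≠ ⊥) :
    p ≤ q := by
  by_contra hpq
  obtain ⟨M, hM, hpM⟩ := exists_isCompl_inf_ne_bot_of_not_le hpq
  exact h M (finrank_add_eq_of_isCompl hM) hpM (disjoint_iff.mp hM.disjoint.symm)

end Submodule

theorem special_position_two_planes_general
    (n k : ℕ) (hkn : k ≤ n)
    (l₁ l₂ : Submodule ℂ (Fin (n + 1) → ℂ))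
    (h₁ : finrank ℂ l₁ = k) (h₂ : finrank ℂ l₂ = k)
    (hsp : ∀ L : Submodule ℂ (Fin (n + 1) → ℂ), finrank ℂ L = n - k + 1 →
      ((l₁ ⊓ L ≠ ⊥ → l₂ ⊓ L ≠ ⊥) ∧ (l₂ ⊓ L ≠ ⊥ → l₁ ⊓ L ≠ ⊥))) :
    l₁ = l₂ := by
  have hdim (L : Submodule ℂ (Fin (n + 1) → ℂ))
      (hL : finrank ℂ L + k = finrank ℂ (Fin (n + 1) → ℂ)) : finrank ℂ L = n - k + 1 := by
    rw [finrank_fin_fun] at hL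
    omega
  apply le_antisymm
  · exact Submodule.le_of_forall_finrank_add_eq_inf_ne_bot fun L hL =>
      (hsp L (hdim L (h₂ ▸ hL))).1
  · exact Submodule.le_of_forall_finrank_add_eq_inf_ne_bot fun L hL =>
      (hsp L (hdim L (h₁ ▸ hL))).2

/-- If two `(k-1)`-dimensional linear subspaces `l₁, l₂` of `ℙⁿ` (formulated as
`k`-dimensional linear subspaces of `ℂ^{n+1}`) are in special position with respect to
`(n-k)`-planes (i.e., every `(n-k)`-plane meeting one of them meets the other), then
`l₁ = l₂`. -/
theorem special_position_two_planes
    (n k : ℕ) (hk : 2 ≤ k) (hkn : k ≤ n)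
    (l₁ l₂ : Submodule ℂ (Fin (n + 1) → ℂ))
    (h₁ : finrank ℂ l₁ = k) (h₂ : finrank ℂ l₂ = k)
    (hsp : ∀ L : Submodule ℂ (Fin (n + 1) → ℂ), finrank ℂ L = n - k + 1 →
      ((l₁ ⊓ L ≠ ⊥ → l₂ ⊓ L ≠ ⊥) ∧ (l₂ ⊓ L ≠ ⊥ → l₁ ⊓ L ≠ ⊥))) :
    l₁ = l₂ :=
  special_position_two_planes_general n k hkn l₁ l₂ h₁ h₂ hsp
end

section
/- Let l₁,…,l_d be (k-1)-planes in ℙⁿ in special position with respect to (n-k)-planes, and suppose R ⊂ ℙⁿ is a linear subspace containing all l_i with i ≠ j for some fixed j. Then l_j ⊆ R as well. -/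
/-!
If `l j ⊄ R`, choose a hyperplane `H ⊇ R` not containing `l j` and a complement `C` of
`l j ⊓ H` inside `H`. Then `C` misses `l j` and has the dimension `n - k + 1` of an
`(n - k)`-plane, while every `l i ≤ R ≤ H` with `i ≠ j` meets it, because
`dim l i + dim C = n + 1 > dim H`. This contradicts special position.
-/

open Module

namespace Submodule

variable {K V : Type*} [DivisionRing K] [AddCommGroup V] [Module K V] [FiniteDimensional K V]

theorem exists_hyperplane_ge_and_sup_eq_top_of_not_le {W R : Submodule K V} (h : ¬W ≤ R) :
    ∃ H : Submodule K V, R ≤ H ∧ W ⊔ H = ⊤ ∧ finrank K H + 1 = finrank K V := by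
  obtain ⟨v, hvW, hvR⟩ := SetLike.not_le_iff_exists.mp h
  obtain ⟨f, hfv, hRf⟩ := R.exists_le_ker_of_notMem hvR
  have hf : f ≠ 0 := by rintro rfl; exact hfv rfl
  have hvH : v ∉ LinearMap.ker f := hfv
  refine ⟨LinearMap.ker f, hRf, ?_, Dual.finrank_ker_add_one_of_ne_zero hf⟩
  exact (LinearMap.isCoatom_ker_of_surjective (LinearMap.surjective hf)).lt_iff.mp <|
    lt_of_le_of_ne le_sup_right fun hH => hvH (hH ▸ mem_sup_left hvW)

theorem exists_le_finrank_add_eq_and_inf_eq_bot {W H : Submodule K V} (hWH : W ⊔ H = ⊤) :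
    ∃ C ≤ H, finrank K C + finrank K W = finrank K V ∧ W ⊓ C = ⊥ := by
  obtain ⟨C, hdisj, hsup⟩ :=
    IsModularLattice.exists_disjoint_and_sup_eq (inf_le_right : W ⊓ H ≤ H)
  have hCH : C ≤ H := hsup ▸ le_sup_right
  refine ⟨C, hCH, ?_, ?_⟩
  · have hWH' := finrank_sup_add_finrank_inf_eq W H
    have hC := finrank_sup_add_finrank_inf_eq (W ⊓ H) C
    rw [hWH, finrank_top] at hWH'
    rw [hsup, hdisj.eq_bot, finrank_bot] at hC
    omega
  · exact le_bot_iff.mp <| hdisj.eq_bot ▸ le_inf (inf_le_inf_left W hCH) inf_le_right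

theorem inf_ne_bot_of_finrank_lt_add {U C H : Submodule K V} (hU : U ≤ H) (hC : C ≤ H)
    (h : finrank K H < finrank K U + finrank K C) : U ⊓ C ≠ ⊥ := by
  intro hUC
  have hsup := finrank_sup_add_finrank_inf_eq U C
  have hle := finrank_mono (sup_le hU hC)
  rw [hUC, finrank_bot] at hsup
  omega

theorem exists_inf_eq_bot_and_inf_ne_bot_of_not_le {W R : Submodule K V} (h : ¬W ≤ R) :
    ∃ C : Submodule K V, finrank K C + finrank K W = finrank K V ∧ W ⊓ C = ⊥ ∧
      ∀ U ≤ R, finrank K W ≤ finrank K U → U ⊓ C ≠ ⊥ := by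
  obtain ⟨H, hRH, hWH, hH⟩ := exists_hyperplane_ge_and_sup_eq_top_of_not_le h
  obtain ⟨C, hCH, hC, hWC⟩ := exists_le_finrank_add_eq_and_inf_eq_bot hWH
  exact ⟨C, hC, hWC, fun U hUR hWU =>
    inf_ne_bot_of_finrank_lt_add (hUR.trans hRH) hCH (by omega)⟩

end Submodule

theorem special_position_contained_in_span_general
    (n k d : ℕ) (hkn : k ≤ n)
    (l : Fin d → Submodule ℂ (Fin (n + 1) → ℂ))
    (hl : ∀ i, finrank ℂ (l i) = k)
    (hsp : ∀ i, ∀ L : Submodule ℂ (Fin (n + 1) → ℂ), finrank ℂ L = n - k + 1 →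
      (∀ j, j ≠ i → l j ⊓ L ≠ ⊥) → l i ⊓ L ≠ ⊥)
    (j : Fin d) (R : Submodule ℂ (Fin (n + 1) → ℂ))
    (hR : ∀ i, i ≠ j → l i ≤ R) :
    l j ≤ R := by
  by_contra hjR
  obtain ⟨C, hCdim, hjC, hmeet⟩ := Submodule.exists_inf_eq_bot_and_inf_ne_bot_of_not_le hjR
  rw [hl j, finrank_fin_fun] at hCdim
  refine hsp j C (by omega) (fun i hi => hmeet _ (hR i hi) ?_) hjC
  rw [hl i, hl j]

/-- Let `l₁,…,l_d` be `(k-1)`-planes in `ℙⁿ` in special position with respect to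
`(n-k)`-planes, and suppose `R ⊂ ℙⁿ` is a linear subspace containing all `l_i` with
`i ≠ j` for some fixed `j`. Then `l_j ⊆ R` as well. Projective subspaces are formulated
as linear subspaces of `ℂ^{n+1}`. -/
theorem special_position_contained_in_span
    (n k d : ℕ) (hk : 2 ≤ k) (hkn : k ≤ n) (hd : 2 ≤ d) (hdn : d ≤ n)
    (l : Fin d → Submodule ℂ (Fin (n + 1) → ℂ))
    (hl : ∀ i, finrank ℂ (l i) = k)
    (hsp : ∀ i, ∀ L : Submodule ℂ (Fin (n + 1) → ℂ), finrank ℂ L = n - k + 1 →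
      (∀ j, j ≠ i → l j ⊓ L ≠ ⊥) → l i ⊓ L ≠ ⊥)
    (j : Fin d) (R : Submodule ℂ (Fin (n + 1) → ℂ))
    (hR : ∀ i, i ≠ j → l i ≤ R) :
    l j ≤ R :=
  special_position_contained_in_span_general n k d hkn l hl hsp j R hR
end

section
/- Let 2 ≤ k, d ≤ n be integers and suppose the (k-1)-planes l₁,…,l_d ⊂ ℙⁿ are in special position with respect to (n-k)-planes of ℙⁿ. Then the dimension of their linear span Span(l₁,…,l_d) in ℙⁿ is at most ⌊kd/2⌋ − 1. -/
/-!
Let `W = l₁ + ⋯ + l_d` and `φ(A) = 2 dim A + k · #{j | lⱼ ⊄ A}` for `A ≤ W`. Since `φ(W) = 2 dim W`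
and `φ(0) ≤ kd`, it suffices that some minimiser `A` of `φ` contains every `lⱼ`. Take `A` of
maximal dimension among the minimisers and suppose `lᵢ ⊄ A`. Every proper enlargement of `A`
increases `φ`, so adding a nonempty set `X` of uncovered planes raises `2 dim` by more than
`k · #X`. With `X = {i}` this gives `dim (A ∩ lᵢ) < k`, so a greedy choice yields `C ≤ A` missing
`A ∩ lᵢ` but meeting every covered `lⱼ`; for general `X ∋ i` it is Hall's condition for the
remaining uncovered planes modulo `A + lᵢ`, and Rado's theorem gives `uⱼ ∈ lⱼ` independent
modulo `A + lᵢ`. Then `S = span {uⱼ} + C` misses `lᵢ` and meets every other `lⱼ`;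
a complement of `lᵢ` containing `S` is an `(n - k)`-plane violating special position.
-/

open Module Submodule Finset

section

variable {K V ι : Type*} [Field K] [AddCommGroup V] [Module K V]

def LinearIndepModulo (B : Submodule K V) (T : Finset ι) (u : ι → V) : Prop :=
  ∀ a : ι → K, ∑ j ∈ T, a j • u j ∈ B → ∀ j ∈ T, a j = 0

namespace LinearIndepModulo

variable {B N : Submodule K V} {T T' : Finset ι} {u : ι → V}

theorem notMem (h : LinearIndepModulo B T u) {j : ι} (hj : j ∈ T) : u j ∉ B := by
  classical
  intro hu
  have := h (Pi.single j 1) (by simpa [Pi.single_apply, hj] using hu) j hj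
  simp at this

theorem disjoint_span (h : LinearIndepModulo B T u) : Disjoint B (span K (u '' T)) := by
  rw [disjoint_def]
  intro x hxB hx
  obtain ⟨a, rfl⟩ := (mem_span_image_finset_iff_exists_fun' K).1 hx
  exact Finset.sum_eq_zero fun j hj => by rw [h a hxB j hj, zero_smul]

theorem of_singleton {j : ι} (hj : u j ∉ B) : LinearIndepModulo B {j} u := by
  intro a ha t ht
  rw [Finset.mem_singleton.1 ht]
  by_contra hne
  rw [Finset.sum_singleton, Submodule.smul_mem_iff _ hne] at ha
  exact hj ha

theorem piecewise [DecidableEq ι] {u₁ u₂ : ι → V} (hT : T' ⊆ T)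
    (h₁ : LinearIndepModulo B T' u₁) (hN : ∀ j ∈ T', u₁ j ∈ N)
    (h₂ : LinearIndepModulo (B ⊔ N) (T \ T') u₂) :
    LinearIndepModulo B T (T'.piecewise u₁ u₂) := by
  intro a ha
  have hsplit : ∑ j ∈ T \ T', a j • u₂ j + ∑ j ∈ T', a j • u₁ j
      = ∑ j ∈ T, a j • T'.piecewise u₁ u₂ j := by
    rw [← Finset.sum_sdiff hT]
    congr 1 <;> refine Finset.sum_congr rfl fun j hj => ?_
    · rw [piecewise_eq_of_notMem _ _ _ (mem_sdiff.1 hj).2]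
    · rw [piecewise_eq_of_mem _ _ _ hj]
  have h₂a : ∀ j ∈ T \ T', a j = 0 := by
    refine h₂ a ?_
    have hNsum : ∑ j ∈ T', a j • u₁ j ∈ N := sum_mem fun j hj => smul_mem _ _ (hN j hj)
    rw [← add_sub_cancel_right (∑ j ∈ T \ T', a j • u₂ j) (∑ j ∈ T', a j • u₁ j), hsplit]
    exact sub_mem (mem_sup_left ha) (mem_sup_right hNsum)
  have h₁a : ∀ j ∈ T', a j = 0 := by
    refine h₁ a ?_
    rwa [← hsplit, Finset.sum_eq_zero fun j hj => by rw [h₂a j hj, zero_smul], zero_add] at ha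
  intro j hj
  by_cases hj' : j ∈ T'
  · exact h₁a j hj'
  · exact h₂a j (mem_sdiff.2 ⟨hj, hj'⟩)

end LinearIndepModulo

theorem Finset.piecewise_mem_of_forall {α : Type*} [DecidableEq ι] {t : ι → Set α}
    {T T' : Finset ι} {u₁ u₂ : ι → α} (h₁ : ∀ j ∈ T', u₁ j ∈ t j)
    (h₂ : ∀ j ∈ T \ T', u₂ j ∈ t j) : ∀ j ∈ T, T'.piecewise u₁ u₂ j ∈ t j := by
  intro j hj
  by_cases hj' : j ∈ T'
  · rw [piecewise_eq_of_mem _ _ _ hj']; exact h₁ j hj'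
  · rw [piecewise_eq_of_notMem _ _ _ hj']; exact h₂ j (mem_sdiff.2 ⟨hj, hj'⟩)

/-- Rado's theorem for subspaces, relative to a base subspace `B`. -/
theorem exists_linearIndepModulo_of_hall [FiniteDimensional K V] [DecidableEq ι]
    (M : ι → Submodule K V) (T : Finset ι) (B : Submodule K V)
    (hall : ∀ T' ⊆ T, T'.Nonempty → finrank K B + #T' ≤ finrank K ↥(B ⊔ T'.sup M)) :
    ∃ u : ι → V, (∀ j ∈ T, u j ∈ M j) ∧ LinearIndepModulo B T u := by
  induction T using Finset.strongInduction generalizing B with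
  | H T ih =>
  -- Either some proper subfamily is critical (split along it), or all have surplus.
  by_cases hcrit : ∃ T' ⊂ T, T'.Nonempty ∧ finrank K ↥(B ⊔ T'.sup M) ≤ finrank K B + #T'
  · obtain ⟨T', hT'T, hT'ne, hT'crit⟩ := hcrit
    obtain ⟨u₁, hu₁M, hu₁⟩ := ih T' hT'T B fun T'' h => hall T'' (h.trans hT'T.subset)
    obtain ⟨u₂, hu₂M, hu₂⟩ :=
      ih (T \ T') (sdiff_ssubset hT'T.subset hT'ne) (B ⊔ T'.sup M) fun T'' hT'' hne => by
        have hdisj : Disjoint T' T'' := disjoint_of_subset_right hT'' disjoint_sdiff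
        have := hall (T' ∪ T'') (union_subset hT'T.subset (hT''.trans sdiff_subset))
          (hT'ne.mono subset_union_left)
        rw [card_union_of_disjoint hdisj, sup_union, ← sup_assoc] at this
        omega
    exact ⟨T'.piecewise u₁ u₂, piecewise_mem_of_forall hu₁M hu₂M,
      hu₁.piecewise hT'T.subset (fun j hj => le_sup (f := M) hj (hu₁M j hj)) hu₂⟩
  · push Not at hcrit
    obtain rfl | ⟨j₀, hj₀⟩ := T.eq_empty_or_nonempty
    · exact ⟨0, by simp, fun _ _ j hj => absurd hj (notMem_empty j)⟩
    obtain ⟨x, hxM, hxB⟩ : ∃ x ∈ M j₀, x ∉ B := by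
      refine SetLike.not_le_iff_exists.mp fun hle => ?_
      have := hall {j₀} (singleton_subset_iff.2 hj₀) (singleton_nonempty j₀)
      rw [sup_singleton, sup_eq_left.2 hle, card_singleton] at this
      omega
    have hj₀T : {j₀} ⊆ T := singleton_subset_iff.2 hj₀
    have hrest : T \ {j₀} ⊂ T := sdiff_ssubset hj₀T (singleton_nonempty j₀)
    obtain ⟨u, huM, hu⟩ :=
      ih (T \ {j₀}) hrest (B ⊔ K ∙ x) fun T'' hT'' hne => by
        have hlt := hcrit T'' (hT''.trans_ssubset hrest) hne
        have hx := finrank_add_le_finrank_add_finrank B (K ∙ x)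
        have hmono : finrank K ↥(B ⊔ T''.sup M) ≤ finrank K ↥(B ⊔ (K ∙ x) ⊔ T''.sup M) :=
          finrank_mono (sup_le_sup_right le_sup_left _)
        rw [finrank_span_singleton (ne_of_mem_of_not_mem B.zero_mem hxB).symm] at hx
        omega
    refine ⟨({j₀} : Finset ι).piecewise (fun _ => x) u, piecewise_mem_of_forall ?_ huM,
      LinearIndepModulo.piecewise hj₀T (LinearIndepModulo.of_singleton hxB) ?_ hu⟩
    · simpa using hxM
    · simp [mem_span_singleton_self x]

theorem exists_disjoint_forall_not_disjoint [FiniteDimensional K V] (E : Submodule K V)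
    (M : ι → Submodule K V) (P : Finset ι) (h : ∀ j ∈ P, finrank K E < finrank K (M j)) :
    ∃ C ≤ P.sup M, Disjoint C E ∧ ∀ j ∈ P, ¬ Disjoint (M j) C := by
  classical
  induction P using Finset.induction_on with
  | empty => exact ⟨⊥, bot_le, disjoint_bot_left, by simp⟩
  | insert a P ha ih =>
    obtain ⟨C, hCP, hCE, hC⟩ := ih fun j hj => h j (mem_insert_of_mem hj)
    have hCP' : C ≤ (insert a P).sup M := hCP.trans (sup_mono (subset_insert a P))
    by_cases hMa : M a ≤ E ⊔ C
    · refine ⟨C, hCP', hCE, (forall_mem_insert _ _ _).2 ⟨fun hdisj => ?_, hC⟩⟩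
      -- `M a ⊔ C` would be too large to fit in `E ⊔ C`.
      have h₁ := finrank_sup_add_finrank_inf_eq (M a) C
      rw [hdisj.eq_bot, finrank_bot] at h₁
      have h₂ := finrank_mono (sup_le hMa (le_sup_right : C ≤ E ⊔ C))
      have h₃ := finrank_add_le_finrank_add_finrank E C
      have := h a (mem_insert_self a P)
      omega
    · obtain ⟨x, hxM, hx⟩ := SetLike.not_le_iff_exists.mp hMa
      have hx0 : x ≠ 0 := (ne_of_mem_of_not_mem (E ⊔ C).zero_mem hx).symm
      refine ⟨C ⊔ K ∙ x, sup_le hCP' ?_, ?_, (forall_mem_insert _ _ _).2 ⟨?_, ?_⟩⟩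
      · exact (span_singleton_le_iff_mem _ _).2 (le_sup (f := M) (mem_insert_self a P) hxM)
      · exact (hCE.symm.disjoint_sup_right_of_disjoint_sup_left
          ((disjoint_span_singleton' hx0).2 hx)).symm
      · exact fun hd => hx0 (disjoint_def.1 hd x hxM (mem_sup_right (mem_span_singleton_self x)))
      · exact fun j hj hd => hC j hj (hd.mono_right le_sup_left)

theorem exists_forall_le_and_lt_of_lt {α : Type*} [Preorder α] [WellFoundedGT α] (f : α → ℕ)
    (s : Set α) (hs : s.Nonempty) :
    ∃ a ∈ s, (∀ b ∈ s, f a ≤ f b) ∧ ∀ b ∈ s, a < b → f a < f b := by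
  obtain ⟨a₀, ha₀, hmin⟩ := (InvImage.wf f wellFounded_lt).has_min s hs
  obtain ⟨a, ⟨ha, hfa⟩, hmax⟩ :=
    wellFounded_gt.has_min {b | b ∈ s ∧ f b = f a₀} ⟨a₀, ha₀, rfl⟩
  have hle : ∀ b ∈ s, f a ≤ f b := fun b hb => hfa ▸ not_lt.1 (hmin b hb)
  exact ⟨a, ha, hle, fun b hb hab =>
    (hle b hb).lt_of_ne fun h => hmax b ⟨hb, h.symm.trans hfa⟩ hab⟩

open scoped Classical in
noncomputable def spanPotential [Fintype ι] (k : ℕ) (l : ι → Submodule K V)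
    (A : Submodule K V) : ℕ :=
  2 * finrank K A + k * #{j | ¬ l j ≤ A}

theorem spanPotential_of_forall_le [Fintype ι] {k : ℕ} {l : ι → Submodule K V}
    {A : Submodule K V} (hA : ∀ j, l j ≤ A) : spanPotential k l A = 2 * finrank K A := by
  simp [spanPotential, hA]

theorem spanPotential_le [Fintype ι] (k : ℕ) (l : ι → Submodule K V) (A : Submodule K V) :
    spanPotential k l A ≤ 2 * finrank K A + k * Fintype.card ι := by
  classical
  unfold spanPotential
  gcongr
  exact card_filter_le _ _

theorem two_mul_finrank_add_lt_of_spanPotential_lt [Fintype ι] {k : ℕ} {l : ι → Submodule K V}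
    {A : Submodule K V} {X : Finset ι} (hX : ∀ j ∈ X, ¬ l j ≤ A)
    (h : spanPotential k l A < spanPotential k l (A ⊔ X.sup l)) :
    2 * finrank K A + k * #X < 2 * finrank K ↥(A ⊔ X.sup l) := by
  classical
  unfold spanPotential at h
  have hcard : #{j | ¬ l j ≤ A ⊔ X.sup l} + #X ≤ #{j | ¬ l j ≤ A} := by
    rw [← card_union_of_disjoint]
    · refine card_le_card (union_subset ?_ fun j hj => by simpa using hX j hj)
      exact monotone_filter_right _ fun j _ hj hjA => hj (hjA.trans le_sup_left)
    · refine disjoint_left.2 fun j hj hjX => ?_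
      simp only [mem_filter, mem_univ, true_and] at hj
      exact hj ((le_sup hjX).trans le_sup_right)
  have := Nat.mul_le_mul_left k hcard
  rw [mul_add] at this
  omega

theorem exists_disjoint_forall_ne_not_disjoint [FiniteDimensional K V] [Fintype ι]
    {k : ℕ} (hk : 2 ≤ k) {l : ι → Submodule K V} (hl : ∀ j, finrank K (l j) = k)
    {A : Submodule K V}
    (hspread : ∀ X : Finset ι, X.Nonempty → (∀ j ∈ X, ¬ l j ≤ A) →
      2 * finrank K A + k * #X < 2 * finrank K ↥(A ⊔ X.sup l))
    {i : ι} (hi : ¬ l i ≤ A) :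
    ∃ S, Disjoint S (l i) ∧ ∀ j ≠ i, ¬ Disjoint (l j) S := by
  classical
  have hE : finrank K ↥(A ⊓ l i) < k := by
    have h₁ := hspread {i} (singleton_nonempty i) (by simpa using hi)
    have h₂ := finrank_sup_add_finrank_inf_eq A (l i)
    rw [sup_singleton, card_singleton, mul_one] at h₁
    rw [hl i] at h₂
    omega
  obtain ⟨C, hCA, hCE, hC⟩ :=
    exists_disjoint_forall_not_disjoint (A ⊓ l i) l {j | l j ≤ A} fun j _ => hl j ▸ hE
  replace hCA : C ≤ A := hCA.trans (Finset.sup_le fun j hj => (mem_filter.1 hj).2)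
  set T : Finset ι := ({j | ¬ l j ≤ A} : Finset ι).erase i
  obtain ⟨u, hul, hu⟩ := exists_linearIndepModulo_of_hall l T (A ⊔ l i) fun T' hT' hne => by
    have hiT' : i ∉ T' := fun h => (mem_erase.1 (hT' h)).1 rfl
    have h₁ := hspread (insert i T') (insert_nonempty i T') fun j hj => by
      rcases mem_insert.1 hj with rfl | hj
      · exact hi
      · simpa using (mem_erase.1 (hT' hj)).2
    rw [card_insert_of_notMem hiT', sup_insert, ← sup_assoc] at h₁
    have h₂ := finrank_add_le_finrank_add_finrank A (l i)
    rw [hl i] at h₂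
    have h₃ := hne.card_pos
    nlinarith
  refine ⟨span K (u '' T) ⊔ C, ?_, fun j hj => ?_⟩
  · have hCi : Disjoint C (l i) := by
      rw [disjoint_iff, ← inf_eq_left.2 hCA, inf_assoc]
      exact hCE.eq_bot
    exact hCi.disjoint_sup_left_of_disjoint_sup_right
      (hu.disjoint_span.symm.mono_right (sup_le_sup_right hCA _))
  · by_cases hjA : l j ≤ A
    · exact fun hd => hC j (by simpa using hjA) (hd.mono_right le_sup_right)
    · have hjT : j ∈ T := mem_erase.2 ⟨hj, by simpa using hjA⟩
      refine fun hd => hu.notMem hjT ?_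
      rw [disjoint_def.1 hd _ (hul j hjT) (mem_sup_left (subset_span ⟨j, hjT, rfl⟩))]
      exact zero_mem _

theorem two_mul_finrank_iSup_le [FiniteDimensional K V] [Fintype ι] {k : ℕ} (hk : 2 ≤ k)
    (l : ι → Submodule K V) (hl : ∀ j, finrank K (l j) = k)
    (hsep : ∀ i S, Disjoint S (l i) → ∃ j ≠ i, Disjoint (l j) S) :
    2 * finrank K ↥(⨆ j, l j) ≤ k * Fintype.card ι := by
  classical
  obtain ⟨A, hAW, hmin, hlt⟩ := exists_forall_le_and_lt_of_lt (spanPotential k l)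
    (Set.Iic (⨆ j, l j)) Set.nonempty_Iic
  by_cases hcov : ∀ j, l j ≤ A
  · have hA : A = ⨆ j, l j := le_antisymm hAW (iSup_le hcov)
    calc 2 * finrank K ↥(⨆ j, l j) = spanPotential k l A := by
          rw [spanPotential_of_forall_le hcov, hA]
      _ ≤ spanPotential k l ⊥ := hmin ⊥ (Set.mem_Iic.2 bot_le)
      _ ≤ k * Fintype.card ι := by simpa using spanPotential_le k l ⊥
  · push Not at hcov
    obtain ⟨i, hi⟩ := hcov
    have hspread : ∀ X : Finset ι, X.Nonempty → (∀ j ∈ X, ¬ l j ≤ A) →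
        2 * finrank K A + k * #X < 2 * finrank K ↥(A ⊔ X.sup l) := by
      intro X ⟨j, hj⟩ hXA
      refine two_mul_finrank_add_lt_of_spanPotential_lt hXA (hlt _ ?_ (left_lt_sup.2 ?_))
      · exact sup_le hAW (Finset.sup_le fun j _ => le_iSup l j)
      · exact fun hle => hXA j hj ((le_sup hj).trans hle)
    obtain ⟨S, hSi, hS⟩ := exists_disjoint_forall_ne_not_disjoint hk hl hspread hi
    obtain ⟨j, hji, hj⟩ := hsep i S hSi
    exact (hS j hji hj).elim

end

theorem special_position_span_bound_general
    (n k d : ℕ) (hk : 2 ≤ k) (hkn : k ≤ n)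
    (l : Fin d → Submodule ℂ (Fin (n + 1) → ℂ))
    (hl : ∀ i, finrank ℂ (l i) = k)
    (hsp : ∀ i, ∀ L : Submodule ℂ (Fin (n + 1) → ℂ), finrank ℂ L = n - k + 1 →
      (∀ j, j ≠ i → l j ⊓ L ≠ ⊥) → l i ⊓ L ≠ ⊥) :
    finrank ℂ ↥(⨆ i, l i) ≤ k * d / 2 := by
  have hsep : ∀ i S, Disjoint S (l i) → ∃ j ≠ i, Disjoint (l j) S := by
    intro i S hS
    obtain ⟨L, hSL, hL⟩ := hS.exists_isCompl
    have hrank : finrank ℂ L = n - k + 1 := by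
      have := finrank_add_eq_of_isCompl hL
      rw [hl i, finrank_fin_fun] at this
      omega
    by_contra! h
    exact hsp i L hrank (fun j hj hbot => h j hj ((disjoint_iff.2 hbot).mono_right hSL))
      (disjoint_iff.1 hL.disjoint.symm)
  have := two_mul_finrank_iSup_le hk l hl hsep
  rw [Fintype.card_fin] at this
  omega

/-- Let `2 ≤ k, d ≤ n` and suppose the `(k-1)`-planes `l₁,…,l_d ⊂ ℙⁿ` are in special
position with respect to `(n-k)`-planes of `ℙⁿ`. Then the projective dimension of their
linear span is at most `⌊kd/2⌋ − 1`, i.e. the linear span in `ℂ^{n+1}` has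
`finrank ≤ ⌊kd/2⌋`. -/
theorem special_position_span_bound
    (n k d : ℕ) (hk : 2 ≤ k) (hkn : k ≤ n) (hd : 2 ≤ d) (hdn : d ≤ n)
    (l : Fin d → Submodule ℂ (Fin (n + 1) → ℂ))
    (hl : ∀ i, finrank ℂ (l i) = k)
    (hsp : ∀ i, ∀ L : Submodule ℂ (Fin (n + 1) → ℂ), finrank ℂ L = n - k + 1 →
      (∀ j, j ≠ i → l j ⊓ L ≠ ⊥) → l i ⊓ L ≠ ⊥) :
    finrank ℂ ↥(⨆ i, l i) ≤ k * d / 2 :=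
  special_position_span_bound_general n k d hk hkn l hl hsp
end

section
/- Three distinct lines l₁, l₂, l₃ in ℙⁿ (n ≥ 2) are in special position with respect to (n-2)-planes if and only if they lie on a common plane π ⊂ ℙⁿ and pass through a common point p ∈ π. -/
/-!
A transversal `span {a, b}` (`a ∈ l₁`, `b ∈ l₂` nonzero) missing `l₃` extends to a complement
of `l₃`: a codimension-2 subspace meeting `l₁` and `l₂` but not `l₃`. So in special position
every transversal meets `l₃`. Taking `a = b` puts `l₁ ∩ l₂` inside `l₃`; taking `a ∉ l₃`
gives `l₂ ⊆ span {a} + l₃`, and symmetrically `l₁ + l₂ ⊆ span {a} + l₃`, a plane.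
Conversely, if the lines lie in a plane `π` through a point `p`, a codimension-2 subspace `L`
meets `π` in a line (then it meets `l₃` inside `π`) or in a point, which must then be
`l₁ ∩ l₂ = p ⊆ l₃`.
-/

open Module

namespace Submodule

variable {K V : Type*} [DivisionRing K] [AddCommGroup V] [Module K V]

/-- Three lines are in special position when this holds for each choice of `C` among them;
`L` ranges over the subspaces of dimension complementary to `C`, the `(n-2)`-planes for lines
in `ℙⁿ`. -/
def SpecialPosition (A B C : Submodule K V) : Prop :=
  ∀ L : Submodule K V, finrank K L + finrank K C = finrank K V →
    A ⊓ L ≠ ⊥ → B ⊓ L ≠ ⊥ → C ⊓ L ≠ ⊥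

theorem SpecialPosition.symm {A B C : Submodule K V} (h : SpecialPosition A B C) :
    SpecialPosition B A C :=
  fun L hL hB hA => h L hL hA hB

theorem mem_span_singleton_sup_of_span_pair_inf_ne_bot {C : Submodule K V} {a b : V}
    (ha : a ∉ C) (h : span K {a, b} ⊓ C ≠ ⊥) : b ∈ K ∙ a ⊔ C := by
  obtain ⟨z, ⟨hz, hzC⟩, hz0⟩ := (Submodule.ne_bot_iff _).mp h
  obtain ⟨s, t, rfl⟩ := mem_span_pair.mp hz
  have ht : t ≠ 0 := by
    rintro rfl
    have hs : s ≠ 0 := by rintro rfl; simp at hz0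
    exact ha ((smul_mem_iff C hs).mp (by simpa using hzC))
  have htb : t • b = (s • a + t • b) - s • a := by abel
  refine (smul_mem_iff _ ht).mp ?_
  rw [htb]
  exact sub_mem (mem_sup_right hzC) (mem_sup_left (smul_mem _ s (mem_span_singleton_self a)))

section FiniteDimensional

variable [FiniteDimensional K V]

theorem eq_of_le_of_ne_bot_of_finrank_le_one {p S : Submodule K V} (hpS : p ≤ S) (hp : p ≠ ⊥)
    (hS : finrank K S ≤ 1) : p = S :=
  eq_of_le_of_finrank_le hpS (hS.trans (one_le_finrank_iff.mpr hp))

theorem not_le_of_ne_of_finrank_eq {A B : Submodule K V} (hAB : A ≠ B)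
    (h : finrank K A = finrank K B) : ¬ A ≤ B :=
  fun hle => hAB (eq_of_le_of_finrank_eq hle h)

theorem finrank_inf_lt_of_ne {A B : Submodule K V} (hAB : A ≠ B)
    (h : finrank K A = finrank K B) : finrank K ↥(A ⊓ B) < finrank K A :=
  finrank_lt_finrank_of_lt (inf_le_left.lt_of_ne fun hA =>
    not_le_of_ne_of_finrank_eq hAB h (inf_eq_left.mp hA))

theorem inf_ne_bot_of_finrank_lt_add_s4 {A B P : Submodule K V} (hA : A ≤ P) (hB : B ≤ P)
    (h : finrank K P < finrank K A + finrank K B) : A ⊓ B ≠ ⊥ := by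
  rw [← one_le_finrank_iff]
  have hsum := finrank_sup_add_finrank_inf_eq A B
  have hsup := finrank_mono (sup_le hA hB)
  omega

namespace SpecialPosition

variable {A B C : Submodule K V}

theorem span_pair_inf_ne_bot (h : SpecialPosition A B C) {a b : V} (ha : a ∈ A) (hb : b ∈ B)
    (ha0 : a ≠ 0) (hb0 : b ≠ 0) : span K {a, b} ⊓ C ≠ ⊥ := by
  intro hdisj
  obtain ⟨L, hspan, hLC⟩ := (disjoint_iff.mpr hdisj).exists_isCompl
  refine h L (finrank_add_eq_of_isCompl hLC) ?_ ?_ hLC.symm.inf_eq_bot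
  · exact (Submodule.ne_bot_iff _).mpr ⟨a, ⟨ha, hspan (subset_span (by simp))⟩, ha0⟩
  · exact (Submodule.ne_bot_iff _).mpr ⟨b, ⟨hb, hspan (subset_span (by simp))⟩, hb0⟩

theorem inf_le (h : SpecialPosition A B C) : A ⊓ B ≤ C := by
  rintro v ⟨hvA, hvB⟩
  by_contra hvC
  have hv0 : v ≠ 0 := fun hv => hvC (hv ▸ C.zero_mem)
  have hmeet := h.span_pair_inf_ne_bot hvA hvB hv0 hv0
  rw [Set.pair_eq_singleton, Ne, ← disjoint_iff, disjoint_comm,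
    disjoint_span_singleton' hv0, not_not] at hmeet
  exact hvC hmeet

theorem le_span_singleton_sup (h : SpecialPosition A B C) {v : V} (hv : v ∈ A) (hvC : v ∉ C) :
    B ≤ K ∙ v ⊔ C := by
  intro w hw
  by_cases hw0 : w = 0
  · exact hw0 ▸ zero_mem _
  have hv0 : v ≠ 0 := fun hv => hvC (hv ▸ C.zero_mem)
  exact mem_span_singleton_sup_of_span_pair_inf_ne_bot hvC (h.span_pair_inf_ne_bot hv hw hv0 hw0)

theorem sup_le_span_singleton_sup (h : SpecialPosition A B C) (hBC : ¬ B ≤ C) {v : V}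
    (hv : v ∈ A) (hvC : v ∉ C) : A ⊔ B ≤ K ∙ v ⊔ C := by
  obtain ⟨w, hw, hwC⟩ := SetLike.not_le_iff_exists.mp hBC
  have hB := h.le_span_singleton_sup hv hvC
  refine sup_le ?_ hB
  calc A ≤ K ∙ w ⊔ C := h.symm.le_span_singleton_sup hw hwC
    _ ≤ K ∙ v ⊔ C := sup_le ((span_singleton_le_iff_mem _ _).mpr (hB hw)) le_sup_right

theorem coplanar_concurrent (h : SpecialPosition A B C) (hA : finrank K A = 2)
    (hB : finrank K B = 2) (hC : finrank K C = 2) (hAB : A ≠ B) (hAC : A ≠ C) (hBC : B ≠ C) :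
    finrank K ↥(A ⊔ B) = 3 ∧ finrank K ↥(A ⊓ B) = 1 ∧ C ≤ A ⊔ B ∧ A ⊓ B ≤ C := by
  obtain ⟨v, hv, hvC⟩ :=
    SetLike.not_le_iff_exists.mp (not_le_of_ne_of_finrank_eq hAC (hA.trans hC.symm))
  have hv0 : v ≠ 0 := fun hv => hvC (hv ▸ C.zero_mem)
  have hABP := h.sup_le_span_singleton_sup (not_le_of_ne_of_finrank_eq hBC (hB.trans hC.symm))
    hv hvC
  have hP : finrank K ↥(K ∙ v ⊔ C) ≤ 3 := by
    have := finrank_add_le_finrank_add_finrank (K ∙ v) C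
    rw [finrank_span_singleton hv0, hC] at this
    exact this
  have hsum := finrank_sup_add_finrank_inf_eq A B
  have hinf := finrank_inf_lt_of_ne hAB (hA.trans hB.symm)
  have hmono := finrank_mono hABP
  have hplane : A ⊔ B = K ∙ v ⊔ C := eq_of_le_of_finrank_le hABP (by omega)
  exact ⟨by omega, by omega, hplane ▸ le_sup_right, h.inf_le⟩

end SpecialPosition

theorem specialPosition_of_coplanar_of_concurrent {A B C P p : Submodule K V}
    (hA : finrank K A = 2) (hB : finrank K B = 2) (hC : finrank K C = 2) (hP : finrank K P = 3)
    (hAP : A ≤ P) (hBP : B ≤ P) (hCP : C ≤ P) (hAB : A ≠ B)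
    (hp : p ≠ ⊥) (hpA : p ≤ A) (hpB : p ≤ B) (hpC : p ≤ C) : SpecialPosition A B C := by
  intro L hL hAL hBL
  have hq : P ⊓ L ≠ ⊥ :=
    inf_ne_bot_of_finrank_lt_add_s4 le_top le_top (by rw [finrank_top]; omega)
  rcases le_or_gt (finrank K ↥(P ⊓ L)) 1 with hq1 | hq2
  · -- `P ⊓ L` is a point lying on both `A` and `B`, hence it is `A ⊓ B = p`.
    have hle : ∀ {D : Submodule K V}, D ≤ P → D ⊓ L ≠ ⊥ → P ⊓ L ≤ D := fun hDP hDL =>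
      (eq_of_le_of_ne_bot_of_finrank_le_one inf_le_right
        (by rwa [← inf_assoc, inf_eq_left.mpr hDP]) hq1) ▸ inf_le_left
    have hAB1 : finrank K ↥(A ⊓ B) ≤ 1 := by
      have := finrank_inf_lt_of_ne hAB (hA.trans hB.symm)
      omega
    have hpq : p = P ⊓ L :=
      (eq_of_le_of_ne_bot_of_finrank_le_one (le_inf hpA hpB) hp hAB1).trans
        (eq_of_le_of_ne_bot_of_finrank_le_one (le_inf (hle hAP hAL) (hle hBP hBL)) hq hAB1).symm
    exact ne_bot_of_le_ne_bot hp (le_inf hpC (hpq ▸ inf_le_right))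
  · exact ne_bot_of_le_ne_bot (inf_ne_bot_of_finrank_lt_add_s4 hCP inf_le_left (by omega))
      (inf_le_inf_left C inf_le_right)

end FiniteDimensional

end Submodule

theorem three_lines_special_position_iff_general
    (n : ℕ)
    (l : Fin 3 → Submodule ℂ (Fin (n + 1) → ℂ))
    (hl : ∀ i, finrank ℂ (l i) = 2)
    (hdist : ∀ i j, i ≠ j → l i ≠ l j) :
    (∀ i, ∀ L : Submodule ℂ (Fin (n + 1) → ℂ), finrank ℂ L = n - 1 →
      (∀ j, j ≠ i → l j ⊓ L ≠ ⊥) → l i ⊓ L ≠ ⊥)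
      ↔ ∃ (π : Submodule ℂ (Fin (n + 1) → ℂ)) (p : Submodule ℂ (Fin (n + 1) → ℂ)),
          finrank ℂ π = 3 ∧ finrank ℂ p = 1 ∧ p ≤ π ∧ ∀ i, p ≤ l i ∧ l i ≤ π := by
  have hcodim : ∀ i (L : Submodule ℂ (Fin (n + 1) → ℂ)),
      finrank ℂ L = n - 1 ↔ finrank ℂ L + finrank ℂ (l i) = finrank ℂ (Fin (n + 1) → ℂ) := by
    intro i L
    have := Submodule.finrank_le (l i)
    rw [hl i, finrank_fin_fun] at this ⊢
    omega
  constructor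
  · intro H
    have h0 : Submodule.SpecialPosition (l 1) (l 2) (l 0) := fun L hL h1 h2 =>
      H 0 L ((hcodim 0 L).mpr hL) (by intro j hj; fin_cases j; exacts [absurd rfl hj, h1, h2])
    obtain ⟨hπ, hp, h0π, hp0⟩ := h0.coplanar_concurrent (hl 1) (hl 2) (hl 0)
      (hdist 1 2 (by decide)) (hdist 1 0 (by decide)) (hdist 2 0 (by decide))
    refine ⟨l 1 ⊔ l 2, l 1 ⊓ l 2, hπ, hp, inf_le_sup, fun i => ?_⟩
    fin_cases i
    exacts [⟨hp0, h0π⟩, ⟨inf_le_left, le_sup_left⟩, ⟨inf_le_right, le_sup_right⟩]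
  · rintro ⟨π, p, hπ, hp, -, hpl⟩ i L hL hmeet
    obtain ⟨j, k, hj, hk, hjk⟩ : ∃ j k, j ≠ i ∧ k ≠ i ∧ j ≠ k := by fin_cases i <;> decide
    exact Submodule.specialPosition_of_coplanar_of_concurrent (hl j) (hl k) (hl i) hπ
      (hpl j).2 (hpl k).2 (hpl i).2 (hdist j k hjk) (Submodule.one_le_finrank_iff.mp hp.ge)
      (hpl j).1 (hpl k).1 (hpl i).1 L ((hcodim i L).mp hL) (hmeet j hj) (hmeet k hk)

/-- Three distinct lines `l₁, l₂, l₃` in `ℙⁿ` (`n ≥ 2`) are in special position with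
respect to `(n-2)`-planes if and only if they lie on a common plane `π ⊂ ℙⁿ` and pass
through a common point `p ∈ π`. Lines are `2`-dimensional linear subspaces of `ℂ^{n+1}`,
`(n-2)`-planes are `(n-1)`-dimensional linear subspaces, planes are `3`-dimensional
linear subspaces, and points are `1`-dimensional linear subspaces. -/
theorem three_lines_special_position_iff
    (n : ℕ) (hn : 2 ≤ n)
    (l : Fin 3 → Submodule ℂ (Fin (n + 1) → ℂ))
    (hl : ∀ i, finrank ℂ (l i) = 2)
    (hdist : ∀ i j, i ≠ j → l i ≠ l j) :
    (∀ i, ∀ L : Submodule ℂ (Fin (n + 1) → ℂ), finrank ℂ L = n - 1 →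
      (∀ j, j ≠ i → l j ⊓ L ≠ ⊥) → l i ⊓ L ≠ ⊥)
      ↔ ∃ (π : Submodule ℂ (Fin (n + 1) → ℂ)) (p : Submodule ℂ (Fin (n + 1) → ℂ)),
          finrank ℂ π = 3 ∧ finrank ℂ p = 1 ∧ p ≤ π ∧ ∀ i, p ≤ l i ∧ l i ≤ π :=
  three_lines_special_position_iff_general n l hl hdist
end

section
/- If three distinct lines in ℙⁿ lie on a common plane and meet at a common point, then any (n-2)-plane intersecting two of them also intersects the third; i.e., they are in special position with respect to (n-2)-planes. -/
/-!
Let `L` miss `l₁`, hence the point `p`. Since `L` meets the lines `l₂` and `l₃` through `p`, each of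
them is spanned by `p` and its intersection with `L`, so the plane `l₂ ⊔ l₃` is `p ⊔ M` with `M ≤ L`.
By modularity `l₁ = p ⊔ (l₁ ⊓ M)`, and `l₁ ⊓ M ≤ l₁ ⊓ L = ⊥` forces `l₁ = p`, which is absurd.
-/

open Module

theorem Submodule.covBy_of_le_of_finrank_eq_succ {K V : Type*} [DivisionRing K] [AddCommGroup V]
    [Module K V] {s t : Submodule K V} [FiniteDimensional K t] (hst : s ≤ t)
    (h : finrank K t = finrank K s + 1) : s ⋖ t := by
  refine ⟨lt_of_le_of_ne hst ?_, fun u hsu hut => ?_⟩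
  · rintro rfl
    omega
  · have : FiniteDimensional K u := Submodule.finiteDimensional_of_le hut.le
    have := Submodule.finrank_lt_finrank_of_lt hsu
    have := Submodule.finrank_lt_finrank_of_lt hut
    omega

section ModularLattice

variable {α : Type*} [Lattice α] [OrderBot α]

theorem CovBy.sup_eq_of_inf_eq_bot {p l x : α} (h : p ⋖ l) (hxl : x ≤ l) (hx : x ≠ ⊥)
    (hpx : p ⊓ x = ⊥) : p ⊔ x = l :=
  (h.eq_or_eq le_sup_left (sup_le h.le hxl)).resolve_left fun hp =>
    hx (eq_bot_iff.2 (hpx ▸ le_inf (hp ▸ le_sup_right) le_rfl))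

variable [IsModularLattice α]

theorem inf_ne_bot_of_concurrent_coplanar {p l₁ l₂ l₃ π L : α}
    (h₁ : p ⋖ l₁) (h₂ : p ⋖ l₂) (h₃ : p ⋖ l₃) (h₂π : l₂ ⋖ π) (h₁π : l₁ ≤ π) (h₃π : l₃ ≤ π)
    (h₂₃ : l₂ ≠ l₃) (hL₂ : l₂ ⊓ L ≠ ⊥) (hL₃ : l₃ ⊓ L ≠ ⊥) : l₁ ⊓ L ≠ ⊥ := by
  intro hL₁
  have hpL : p ⊓ L = ⊥ := eq_bot_iff.2 (hL₁ ▸ inf_le_inf_right L h₁.le)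
  have hspan : ∀ {l}, p ⋖ l → l ⊓ L ≠ ⊥ → p ⊔ l ⊓ L = l := fun h hl =>
    h.sup_eq_of_inf_eq_bot inf_le_left hl (eq_bot_iff.2 (hpL ▸ inf_le_inf_left p inf_le_right))
  have hπ : l₂ ⊔ l₃ = π := by
    refine (h₂π.eq_or_eq le_sup_left (sup_le h₂π.le h₃π)).resolve_left fun h => h₂₃ ?_
    have h₃₂ : l₃ ≤ l₂ := le_sup_right.trans h.le
    exact ((h₂.eq_or_eq h₃.le h₃₂).resolve_left h₃.lt.ne').symm
  have hl₁ : l₁ = p ⊔ (l₂ ⊓ L ⊔ l₃ ⊓ L) ⊓ l₁ := calc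
    l₁ = π ⊓ l₁ := (inf_eq_right.2 h₁π).symm
    _ = (p ⊔ (l₂ ⊓ L ⊔ l₃ ⊓ L)) ⊓ l₁ := by
      rw [← hπ, ← hspan h₂ hL₂, ← hspan h₃ hL₃, sup_sup_sup_comm, sup_idem, hspan h₂ hL₂,
        hspan h₃ hL₃]
    _ = p ⊔ (l₂ ⊓ L ⊔ l₃ ⊓ L) ⊓ l₁ := sup_inf_assoc_of_le _ h₁.le
  have hM : (l₂ ⊓ L ⊔ l₃ ⊓ L) ⊓ l₁ = ⊥ :=
    eq_bot_iff.2 (hL₁ ▸ le_inf inf_le_right (inf_le_left.trans (sup_le inf_le_right inf_le_right)))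
  exact h₁.lt.ne' (by rwa [hM, sup_bot_eq] at hl₁)

end ModularLattice

theorem concurrent_coplanar_lines_special_position_general
    (n : ℕ)
    (l : Fin 3 → Submodule ℂ (Fin (n + 1) → ℂ))
    (hl : ∀ i, finrank ℂ (l i) = 2)
    (hdist : ∀ i j, i ≠ j → l i ≠ l j)
    (π : Submodule ℂ (Fin (n + 1) → ℂ)) (hπ : finrank ℂ π = 3)
    (p : Submodule ℂ (Fin (n + 1) → ℂ)) (hp : finrank ℂ p = 1)
    (hin : ∀ i, p ≤ l i ∧ l i ≤ π) :
    ∀ i, ∀ L : Submodule ℂ (Fin (n + 1) → ℂ), finrank ℂ L = n - 1 →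
      (∀ j, j ≠ i → l j ⊓ L ≠ ⊥) → l i ⊓ L ≠ ⊥ := by
  intro i L _ hmeet
  obtain ⟨j, k, hji, hki, hjk⟩ : ∃ j k : Fin 3, j ≠ i ∧ k ≠ i ∧ j ≠ k := by
    fin_cases i <;> decide
  have hpl : ∀ m, p ⋖ l m := fun m =>
    Submodule.covBy_of_le_of_finrank_eq_succ (hin m).1 (by rw [hl, hp])
  exact inf_ne_bot_of_concurrent_coplanar (hpl i) (hpl j) (hpl k)
    (Submodule.covBy_of_le_of_finrank_eq_succ (hin j).2 (by rw [hπ, hl])) (hin i).2 (hin k).2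
    (hdist j k hjk) (hmeet j hji) (hmeet k hki)

/-- If three distinct lines in `ℙⁿ` lie on a common plane and meet at a common point,
then any `(n-2)`-plane intersecting two of them also intersects the third; i.e., they
are in special position with respect to `(n-2)`-planes. Lines are `2`-dimensional linear
subspaces of `ℂ^{n+1}`, planes `3`-dimensional, points `1`-dimensional, and
`(n-2)`-planes are `(n-1)`-dimensional linear subspaces. -/
theorem concurrent_coplanar_lines_special_position
    (n : ℕ) (hn : 2 ≤ n)
    (l : Fin 3 → Submodule ℂ (Fin (n + 1) → ℂ))
    (hl : ∀ i, finrank ℂ (l i) = 2)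
    (hdist : ∀ i j, i ≠ j → l i ≠ l j)
    (π : Submodule ℂ (Fin (n + 1) → ℂ)) (hπ : finrank ℂ π = 3)
    (p : Submodule ℂ (Fin (n + 1) → ℂ)) (hp : finrank ℂ p = 1)
    (hin : ∀ i, p ≤ l i ∧ l i ≤ π) :
    ∀ i, ∀ L : Submodule ℂ (Fin (n + 1) → ℂ), finrank ℂ L = n - 1 →
      (∀ j, j ≠ i → l j ⊓ L ≠ ⊥) → l i ⊓ L ≠ ⊥ :=
  concurrent_coplanar_lines_special_position_general n l hl hdist π hπ p hp hin
end
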